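/- Let C be a small category satisfying (C1), (C2) and (C3). Suppose that for every object A of C and every subgroup G of Aut_C(A), the presheaf on C^op given on objects by X ↦ Hom_C(A, X)∕G (quotient by the precomposition action of G) is a sheaf for the atomic topology J_at on C^op. Then every morphism of C is definable by self-intersections. -/

import Mathlib

open CategoryTheory Limits Opposite

universe w v u

/-- A chain indexed by a preorder stabilizes if there is an index from which on
all the morphisms of the chain are isomorphisms. -/
def ChainStabilizes {J : Type w} [Preorder J] {C : Type u} [Category.{v} C]
    (F : J ⥤ C) : Prop :=
  ∃ i : J, ∀ j : J, ∀ h : i ≤ j, IsIso (F.map (homOfLE h))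

/-- A category is co-well-founded if every chain indexed by a (nonempty) well-ordered
poset stabilizes. -/
def CoWellFounded (C : Type u) [Category.{v} C] : Prop :=
  ∀ (J : Type w) (_ : LinearOrder J) (_ : WellFoundedLT J) (_ : Nonempty J)
    (F : J ⥤ C), ChainStabilizes F

/-- An object is finitely presentable if its covariant Hom functor preserves
filtered colimits. -/
def IsFinitelyPresentableObj {C : Type u} [Category.{v} C] (X : C) : Prop :=
  ∀ (J : Type w) (_ : SmallCategory J) (_ : IsFiltered J),
    Nonempty (PreservesColimitsOfShape J (coyoneda.obj (op X)))

/-- A category is locally finitely presentable if it is cocomplete and there is a small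
family of finitely presentable objects such that every object is a filtered colimit of
objects of this family. -/
def LocallyFinitelyPresentable (C : Type u) [Category.{v} C] : Prop :=
  HasColimitsOfSize.{w, w} C ∧
  ∃ (ι : Type w) (G : ι → C),
    (∀ i, IsFinitelyPresentableObj.{w} (G i)) ∧
    ∀ X : C, ∃ (J : Type w) (_ : SmallCategory J) (_ : IsFiltered J) (D : J ⥤ C)
      (c : Cocone D), Nonempty (IsColimit c) ∧ Nonempty (c.pt ≅ X) ∧
      ∀ j : J, ∃ i : ι, Nonempty (D.obj j ≅ G i)

/-- An atom of a topos: an object which is not initial and whose only subobjects are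
the initial one and itself. -/
def IsAtomObj {C : Type u} [Category.{v} C] [HasInitial C] (X : C) : Prop :=
  (¬ Nonempty (X ≅ ⊥_ C)) ∧
  ∀ S : Subobject X, Nonempty ((S : C) ≅ ⊥_ C) ∨ S = ⊤

/-- A category has amalgamation (the left Ore condition) if every span admits a cocone. -/
def HasAmalgamation (C : Type u) [Category.{v} C] : Prop :=
  ∀ {X A B : C} (f : X ⟶ A) (g : X ⟶ B), ∃ (W : C) (h : A ⟶ W) (k : B ⟶ W), f ≫ h = g ≫ k

/-- `J` is the atomic topology: its covering sieves are exactly the nonempty sieves. -/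
def IsAtomicTopology {C : Type u} [Category.{v} C] (J : GrothendieckTopology C) : Prop :=
  ∀ (X : C) (S : Sieve X), S ∈ J X ↔ ∃ (Y : C) (f : Y ⟶ X), S f

/-- Condition (C2'): for every pullback square `X∩Y → X → Z`, `X∩Y → Y → Z` and every
pair `u, v : Z ⇉ A` agreeing on `X∩Y`, there are `w : A → A'` and a finite sequence of
morphisms `Z → A'` from `u ≫ w` to `v ≫ w` in which consecutive morphisms agree on `X`
or on `Y`. -/
def CondC2' (C : Type u) [Category.{v} C] : Prop :=
  ∀ {W X Y Z : C} (fst : W ⟶ X) (snd : W ⟶ Y) (f : X ⟶ Z) (g : Y ⟶ Z),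
    IsPullback fst snd f g →
    ∀ {A : C} (u v : Z ⟶ A), (fst ≫ f) ≫ u = (fst ≫ f) ≫ v →
      ∃ (A' : C) (w : A ⟶ A') (n : ℕ) (k : Fin (n + 1) → (Z ⟶ A')),
        k 0 = u ≫ w ∧ k (Fin.last n) = v ≫ w ∧
        ∀ i : Fin n, f ≫ k i.castSucc = f ≫ k i.succ ∨ g ≫ k i.castSucc = g ≫ k i.succ
universe v₂ u₂

/-- The composite of the Yoneda embedding `Cᵒᵖ ⥤ (Cᵒᵖᵒᵖ ⥤ Type u)` with sheafification
for a topology `J` on `Cᵒᵖ`. -/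
noncomputable def atomicYoneda {C : Type u} [SmallCategory C]
    (J : GrothendieckTopology Cᵒᵖ) : Cᵒᵖ ⥤ Sheaf J (Type u) :=
  yoneda ⋙ presheafToSheaf J (Type u)

/-- Helper (port): the initial sheaf, given directly since instance search now times out. -/
instance instHasInitialSheafTypeAtomic {C : Type u} [SmallCategory C]
    (J : GrothendieckTopology Cᵒᵖ) : HasInitial (Sheaf J (Type u)) :=
  Sheaf.instHasColimitsOfShape

/-- Condition (C1): the composite of Yoneda with sheafification is fully faithful and
sends every object of `Cᵒᵖ` to an atom. -/
def CondC1 {C : Type u} [SmallCategory C] (J : GrothendieckTopology Cᵒᵖ) : Prop :=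
  Nonempty (atomicYoneda J).FullyFaithful ∧
  ∀ n : Cᵒᵖ, IsAtomObj ((atomicYoneda J).obj n)

/-- Condition (C2): `Cᵒᵖ` has pushouts and the composite of Yoneda with sheafification
preserves them. -/
def CondC2 {C : Type u} [SmallCategory C] (J : GrothendieckTopology Cᵒᵖ) : Prop :=
  HasPushouts Cᵒᵖ ∧
  ∀ {W X Y Z : Cᵒᵖ} (f : W ⟶ X) (g : W ⟶ Y) (inl : X ⟶ Z) (inr : Y ⟶ Z),
    IsPushout f g inl inr →
    IsPushout ((atomicYoneda J).map f) ((atomicYoneda J).map g)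
      ((atomicYoneda J).map inl) ((atomicYoneda J).map inr)

/-- Condition (C3): `C` is well-founded, i.e. `Cᵒᵖ` is co-well-founded. -/
def CondC3 (C : Type u) [SmallCategory C] : Prop :=
  CoWellFounded.{u} Cᵒᵖ

/-- Condition (C4): the automorphism group of every object of `C` is Noetherian: every
ascending chain of subgroups stabilizes. -/
def CondC4 (C : Type u) [SmallCategory C] : Prop :=
  ∀ X : C, ∀ c : ℕ → Subgroup (Aut X), Monotone c → ∃ N, ∀ n, N ≤ n → c n = c N

/-- `π : L.obj m ⟶ Q` exhibits `Q` as the quotient of `L.obj m` by the subgroup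
`G ⊆ Aut m`, i.e. as the common coequalizer of all the pairs `(L.map σ, id)`, `σ ∈ G`. -/
def IsGroupQuotientAlong {C : Type u} [Category.{v} C] {D : Type u₂} [Category.{v₂} D]
    (L : C ⥤ D) {m : C} (G : Subgroup (Aut m)) {Q : D} (π : L.obj m ⟶ Q) : Prop :=
  (∀ σ ∈ G, L.map σ.hom ≫ π = π) ∧
  ∀ (Q' : D) (π' : L.obj m ⟶ Q'), (∀ σ ∈ G, L.map σ.hom ≫ π' = π') →
    ∃! t : Q ⟶ Q', π ≫ t = π'

/-- A morphism `f : A ⟶ B` is definable by self-intersections: every `u : Y ⟶ B` such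
that, for all pairs `α, β : B ⇉ X` equalized by `f`, `u ≫ β` factors as `v ≫ α`,
factors through `f`. -/
def DefinableBySelfIntersections {C : Type u} [Category.{v} C] {A B : C}
    (f : A ⟶ B) : Prop :=
  ∀ {Y : C} (u : Y ⟶ B),
    (∀ {X : C} (α β : B ⟶ X), f ≫ α = f ≫ β → ∃ v : Y ⟶ B, u ≫ β = v ≫ α) →
    ∃ t : Y ⟶ A, t ≫ f = u

/-- The presheaf on `Cᵒᵖ` sending `X` to the quotient `Hom_C(A, X)∕G` of the hom-set by
the precomposition action of a subgroup `G ⊆ Aut A`. -/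
def homQuotPre {C : Type u} [Category.{v} C] (A : C) (G : Subgroup (Aut A)) :
    (Cᵒᵖ)ᵒᵖ ⥤ Type v where
  obj X := Quot (fun f g : (A ⟶ X.unop.unop) => ∃ σ ∈ G, σ.hom ≫ f = g)
  map u := TypeCat.ofHom (Quot.map (fun f => f ≫ u.unop.unop)
    (by rintro f g ⟨σ, hσ, rfl⟩; exact ⟨σ, hσ, by simp⟩))
  map_id X := by
    ext x
    obtain ⟨f, rfl⟩ := Quot.exists_rep x
    show Quot.mk _ (f ≫ (𝟙 X).unop.unop) = Quot.mk _ f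
    simp
  map_comp u v := by
    ext x
    obtain ⟨f, rfl⟩ := Quot.exists_rep x
    show Quot.mk _ (f ≫ (u ≫ v).unop.unop) = Quot.mk _ ((f ≫ u.unop.unop) ≫ v.unop.unop)
    simp

namespace Stmt9Aux


variable {C : Type u} [SmallCategory C]

lemma relEquiv {A X : C} (G : Subgroup (Aut A)) :
    Equivalence (fun f g : A ⟶ X => ∃ σ ∈ G, σ.hom ≫ f = g) := by
  constructor
  · intro f
    exact ⟨1, G.one_mem, Category.id_comp f⟩
  · rintro f g ⟨σ, hσ, rfl⟩
    refine ⟨σ⁻¹, G.inv_mem hσ, ?_⟩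
    exact Iso.inv_hom_id_assoc (σ : A ≅ A) f
  · rintro f g h ⟨σ, hσ, rfl⟩ ⟨τ, hτ, rfl⟩
    refine ⟨σ * τ, G.mul_mem hσ hτ, ?_⟩
    rw [Aut.Aut_mul_def]
    exact Category.assoc τ.hom σ.hom f

lemma quotRel {A : C} (G : Subgroup (Aut A)) {X : C} (f g : A ⟶ X)
    (h : Quot.mk (fun f g : A ⟶ X => ∃ σ ∈ G, σ.hom ≫ f = g) f
       = Quot.mk (fun f g : A ⟶ X => ∃ σ ∈ G, σ.hom ≫ f = g) g) :
    ∃ σ ∈ G, σ.hom ≫ f = g :=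
  ((relEquiv G).eqvGen_iff).mp (Quot.eqvGen_exact h)

lemma ore (J : GrothendieckTopology Cᵒᵖ) (hJ : IsAtomicTopology J)
    {W V Z : C} (s : W ⟶ V) (t : W ⟶ Z) :
    ∃ (T : C) (p : V ⟶ T) (r : Z ⟶ T), s ≫ p = t ≫ r := by
  have h1 : Sieve.generate (Presieve.singleton s.op) ∈ J (op W) :=
    (hJ _ _).mpr ⟨op V, s.op, op V, 𝟙 _, s.op, ⟨⟩, Category.id_comp _⟩
  have h2 := J.pullback_stable t.op h1
  obtain ⟨Q, h, Y₁, h₁, g₁, hg₁, e⟩ := (hJ _ _).mp h2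
  cases hg₁
  refine ⟨Q.unop, h₁.unop, h.unop, ?_⟩
  have := congrArg Quiver.Hom.unop e
  simpa using this

lemma cancelRight (J : GrothendieckTopology Cᵒᵖ) (hJ : IsAtomicTopology J)
    (hsheaf : ∀ (A : C) (G : Subgroup (Aut A)), Presheaf.IsSheaf J (homQuotPre A G))
    {P W V : C} (s : W ⟶ V) (x y : P ⟶ W) (h : x ≫ s = y ≫ s) : x = y := by
  have hsh : Presieve.IsSheaf J (homQuotPre P ⊥) :=
    (isSheaf_iff_isSheaf_of_type J _).mp (hsheaf P ⊥)
  have hmem : Sieve.generate (Presieve.singleton s.op) ∈ J (op W) :=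
    (hJ _ _).mpr ⟨op V, s.op, op V, 𝟙 _, s.op, ⟨⟩, Category.id_comp _⟩
  have hfor := hsh _ hmem
  let xf : Presieve.FamilyOfElements (homQuotPre P (⊥ : Subgroup (Aut P)))
      (Sieve.generate (Presieve.singleton s.op)).arrows :=
    fun Q h hh => (Quot.mk _ (x ≫ h.unop) : Quot (fun f g : P ⟶ Q.unop => ∃ σ ∈ (⊥ : Subgroup (Aut P)), σ.hom ≫ f = g))
  have hx : xf.IsAmalgamation (Quot.mk (fun f g : P ⟶ W => ∃ σ ∈ (⊥ : Subgroup (Aut P)), σ.hom ≫ f = g) x) := fun Q h hh => rfl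
  have hy : xf.IsAmalgamation (Quot.mk (fun f g : P ⟶ W => ∃ σ ∈ (⊥ : Subgroup (Aut P)), σ.hom ≫ f = g) y) := by
    rintro Q h' ⟨Y₁, h₁, g₁, hg₁, rfl⟩
    cases hg₁
    show Quot.mk _ (y ≫ (h₁ ≫ s.op).unop) = Quot.mk _ (x ≫ (h₁ ≫ s.op).unop)
    have e : (h₁ ≫ s.op).unop = s ≫ h₁.unop := by simp
    rw [e, ← Category.assoc, ← Category.assoc, h]
  have heq := hfor.isSeparatedFor xf _ _ hy hx
  obtain ⟨σ, hσ, e⟩ := quotRel (⊥ : Subgroup (Aut P)) y x heq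
  rw [Subgroup.mem_bot] at hσ
  subst hσ
  rw [← e]
  exact Category.id_comp y

lemma diamond (J : GrothendieckTopology Cᵒᵖ) (hJ : IsAtomicTopology J)
    (hsheaf : ∀ (A : C) (G : Subgroup (Aut A)), Presheaf.IsSheaf J (homQuotPre A G))
    {Y X Z : C} (G : Subgroup (Aut Y)) (w : X ⟶ Z) (q : Y ⟶ Z)
    (H : ∀ {Z₂ : C} (γ δ : Z ⟶ Z₂), w ≫ γ = w ≫ δ → ∃ σ ∈ G, σ.hom ≫ (q ≫ γ) = q ≫ δ) :
    ∃ p : Y ⟶ X, p ≫ w = q := by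
  classical
  have hsh : Presieve.IsSheaf J (homQuotPre Y G) :=
    (isSheaf_iff_isSheaf_of_type J _).mp (hsheaf Y G)
  have hmem : Sieve.generate (Presieve.singleton w.op) ∈ J (op X) :=
    (hJ _ _).mpr ⟨op Z, w.op, op Z, 𝟙 _, w.op, ⟨⟩, Category.id_comp _⟩
  have hfor := hsh _ hmem
  have fac : ∀ {Q : Cᵒᵖ} (h : Q ⟶ op X), (Sieve.generate (Presieve.singleton w.op)).arrows h →
      ∃ c : Q ⟶ op Z, c ≫ w.op = h := by
    rintro Q h ⟨Y₁, h₁, g₁, hg₁, rfl⟩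
    cases hg₁
    exact ⟨h₁, rfl⟩
  let xf : Presieve.FamilyOfElements (homQuotPre Y G)
      (Sieve.generate (Presieve.singleton w.op)).arrows :=
    fun Q h hh => (Quot.mk _ (q ≫ ((fac h hh).choose).unop) : Quot (fun a b : Y ⟶ Q.unop => ∃ σ ∈ G, σ.hom ≫ a = b))
  have key : ∀ {Q : C} (γ δ : Z ⟶ Q), w ≫ γ = w ≫ δ →
      Quot.mk (fun a b : Y ⟶ Q => ∃ σ ∈ G, σ.hom ≫ a = b) (q ≫ γ)
        = Quot.mk (fun a b : Y ⟶ Q => ∃ σ ∈ G, σ.hom ≫ a = b) (q ≫ δ) :=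
    fun γ δ hh => Quot.sound (H γ δ hh)
  have hcomp : xf.Compatible := by
    intro Y₁ Y₂ Q g₁ g₂ f₁ f₂ h₁ h₂ hcomm
    have s₁ := (fac f₁ h₁).choose_spec
    have s₂ := (fac f₂ h₂).choose_spec
    show Quot.mk (fun a b : Y ⟶ Q.unop => ∃ σ ∈ G, σ.hom ≫ a = b) ((q ≫ ((fac f₁ h₁).choose).unop) ≫ g₁.unop)
        = Quot.mk (fun a b : Y ⟶ Q.unop => ∃ σ ∈ G, σ.hom ≫ a = b) ((q ≫ ((fac f₂ h₂).choose).unop) ≫ g₂.unop)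
    rw [Category.assoc, Category.assoc]
    apply key
    have e₁ : w ≫ ((fac f₁ h₁).choose).unop = f₁.unop := by
      simpa using congrArg Quiver.Hom.unop s₁
    have e₂ : w ≫ ((fac f₂ h₂).choose).unop = f₂.unop := by
      simpa using congrArg Quiver.Hom.unop s₂
    have e₃ : f₁.unop ≫ g₁.unop = f₂.unop ≫ g₂.unop := by
      simpa using congrArg Quiver.Hom.unop hcomm
    rw [← Category.assoc, ← Category.assoc, e₁, e₂, e₃]
  obtain ⟨t, ht, -⟩ := hfor xf hcomp
  obtain ⟨p₀, rfl⟩ := Quot.exists_rep (t : Quot (fun a b : Y ⟶ X => ∃ σ ∈ G, σ.hom ≫ a = b))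
  have hgen : (Sieve.generate (Presieve.singleton w.op)).arrows w.op :=
    ⟨op Z, 𝟙 _, w.op, ⟨⟩, Category.id_comp _⟩
  have e1 := ht w.op hgen
  obtain ⟨σ, hσ, e⟩ := quotRel G (p₀ ≫ w) (q ≫ ((fac w.op hgen).choose).unop) e1
  have hc : w ≫ ((fac w.op hgen).choose).unop = w ≫ 𝟙 Z := by
    have := congrArg Quiver.Hom.unop (fac w.op hgen).choose_spec
    simpa using this
  obtain ⟨τ, hτ, e2⟩ := H ((fac w.op hgen).choose).unop (𝟙 Z) hc
  refine ⟨τ.hom ≫ σ.hom ≫ p₀, ?_⟩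
  simp only [Category.assoc]
  rw [e, e2, Category.comp_id]

lemma chain_iso (h3 : CondC3 C) (V : ℕ → C) (g : ∀ n, V (n+1) ⟶ V n) :
    ∃ n, IsIso (g n) := by
  let tr : ∀ (i j : ℕ), i ≤ j → (V j ⟶ V i) := fun i j h =>
    Nat.leRecOn h (fun {k} (m : V k ⟶ V i) => g k ≫ m) (𝟙 (V i))
  have tr_self : ∀ i (h : i ≤ i), tr i i h = 𝟙 (V i) := fun i h => Nat.leRecOn_self _
  have tr_succ : ∀ i j (h : i ≤ j) (h' : i ≤ j + 1), tr i (j+1) h' = g j ≫ tr i j h :=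
    fun i j h h' => Nat.leRecOn_succ h _
  have tr_comp : ∀ (i j k : ℕ) (h₁ : i ≤ j) (h₂ : j ≤ k),
      tr j k h₂ ≫ tr i j h₁ = tr i k (h₁.trans h₂) := by
    intro i j k h₁ h₂
    induction k, h₂ using Nat.le_induction with
    | base => rw [tr_self]; simp
    | succ k hk ih =>
        rw [tr_succ j k hk, tr_succ i k (h₁.trans hk), Category.assoc, ih]
  haveI hwf : WellFoundedLT (ULift.{u} ℕ) := by
    constructor
    refine Subrelation.wf (r := InvImage (· < ·) ULift.down) ?_ (InvImage.wf _ Nat.lt_wfRel.wf)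
    intro x y hxy
    exact hxy
  let F : @CategoryTheory.Functor (ULift.{u} ℕ) (Preorder.smallCategory _) Cᵒᵖ _ := {
    obj := fun i => op (V i.down)
    map := fun {i j} h => (tr i.down j.down (ULift.down_le.mpr (leOfHom h))).op
    map_id := fun i => by
      rw [tr_self]
      rfl
    map_comp := fun {i j k} h₁ h₂ => by
      rw [← op_comp, tr_comp] }
  obtain ⟨i, hi⟩ := h3 (ULift.{u} ℕ) inferInstance inferInstance ⟨⟨0⟩⟩ F
  have hle : i ≤ ⟨i.down + 1⟩ := ULift.down_le.mp (Nat.le_succ _)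
  have hiso := hi ⟨i.down + 1⟩ hle
  refine ⟨i.down, ?_⟩
  have e : F.map (homOfLE hle) = (g i.down).op := by
    show (tr i.down (i.down+1) _).op = _
    rw [tr_succ i.down i.down (le_refl _), tr_self, Category.comp_id]
  rw [e] at hiso
  exact isIso_of_op _

lemma endo_iso (h3 : CondC3 C) {X : C} (e : X ⟶ X) : IsIso e := by
  obtain ⟨n, hn⟩ := chain_iso h3 (fun _ => X) (fun _ => e)
  exact hn




structure St (A B Y : C) (f : A ⟶ B) (u : Y ⟶ B) where
  V : C
  fA : A ⟶ V
  uY : Y ⟶ V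
  toB : V ⟶ B
  hf : fA ≫ toB = f
  hu : uY ≫ toB = u
  star : ∀ {Z : C} (γ δ : V ⟶ Z), fA ≫ γ = fA ≫ δ → ∃ v : Y ⟶ V, uY ≫ δ = v ≫ γ

def IsTerm {A B Y : C} {f : A ⟶ B} {u : Y ⟶ B} (s : St A B Y f u) : Prop :=
  ∀ {Z : C} (γ δ : s.V ⟶ Z), s.fA ≫ γ = s.fA ≫ δ → ∃ σ : s.V ≅ s.V, σ.hom ≫ γ = δ

lemma step {A B Y : C} {f : A ⟶ B} {u : Y ⟶ B}
    (hpo : HasPushouts Cᵒᵖ)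
    (ore : ∀ {W V Z : C} (s : W ⟶ V) (t : W ⟶ Z),
      ∃ (T : C) (p : V ⟶ T) (r : Z ⟶ T), s ≫ p = t ≫ r)
    (cancel : ∀ {P W V : C} (s : W ⟶ V) (x y : P ⟶ W), x ≫ s = y ≫ s → x = y)
    (hendo : ∀ {X : C} (e : X ⟶ X), IsIso e)
    (s : St A B Y f u) (hnt : ¬ IsTerm s) :
    ∃ (s' : St A B Y f u) (e : s'.V ⟶ s.V), ¬ IsIso e := by
  haveI := hpo
  have hex : ∃ (Z : C) (γ δ : s.V ⟶ Z),
      (s.fA ≫ γ = s.fA ≫ δ) ∧ ∀ σ : s.V ≅ s.V, σ.hom ≫ γ ≠ δ := by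
    by_contra hc
    push_neg at hc
    exact hnt fun {Z} γ δ h => hc Z γ δ h
  obtain ⟨Zb, γb, δb, hover, hviol⟩ := hex
  let P : C := (pushout γb.op δb.op).unop
  let a : P ⟶ s.V := (pushout.inl γb.op δb.op).unop
  let b : P ⟶ s.V := (pushout.inr γb.op δb.op).unop
  have hab : a ≫ γb = b ≫ δb := by
    have h := pushout.condition (f := γb.op) (g := δb.op)
    have := congrArg Quiver.Hom.unop h
    simpa using this
  have pair : ∀ {T : C} (w₁ w₂ : T ⟶ s.V), w₁ ≫ γb = w₂ ≫ δb →
      ∃ v : T ⟶ P, v ≫ a = w₁ ∧ v ≫ b = w₂ := by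
    intro T w₁ w₂ hw
    have hcond : γb.op ≫ w₁.op = δb.op ≫ w₂.op := by
      rw [← op_comp, ← op_comp, hw]
    refine ⟨(pushout.desc w₁.op w₂.op hcond).unop, ?_, ?_⟩
    · have h' := congrArg Quiver.Hom.unop (pushout.inl_desc w₁.op w₂.op hcond)
      rw [unop_comp] at h'
      simpa using h'
    · have h' := congrArg Quiver.Hom.unop (pushout.inr_desc w₁.op w₂.op hcond)
      rw [unop_comp] at h'
      simpa using h'
  obtain ⟨vb, hvb⟩ := s.star γb δb hover
  obtain ⟨yb, hy1, hy2⟩ := pair vb s.uY hvb.symm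
  obtain ⟨m', hm1, hm2⟩ := pair s.fA s.fA hover
  refine ⟨⟨P, m', yb, b ≫ s.toB, ?_, ?_, ?_⟩, b, ?_⟩
  · rw [← Category.assoc, hm2, s.hf]
  · rw [← Category.assoc, hy2, s.hu]
  · -- the star condition for the new state
    intro Z γ δ hγδ
    obtain ⟨U₁, E₁, J₁, h₁⟩ := ore (a ≫ γb) γ
    obtain ⟨U₂, R, k, h₂⟩ := ore b (δ ≫ J₁)
    have e1 : a ≫ γb ≫ E₁ ≫ k = γ ≫ J₁ ≫ k := by
      calc a ≫ γb ≫ E₁ ≫ k = ((a ≫ γb) ≫ E₁) ≫ k := by simp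
        _ = (γ ≫ J₁) ≫ k := by rw [h₁]
        _ = γ ≫ J₁ ≫ k := by simp
    have e2 : b ≫ δb ≫ E₁ ≫ k = γ ≫ J₁ ≫ k := by
      rw [← Category.assoc, ← hab, Category.assoc]
      exact e1
    have e3 : b ≫ R = δ ≫ J₁ ≫ k := by
      rw [h₂]; simp
    have e4 : s.fA ≫ γb ≫ E₁ ≫ k = s.fA ≫ δb ≫ E₁ ≫ k := by
      simp only [← Category.assoc]
      rw [hover]
    have e5 : s.fA ≫ γb ≫ E₁ ≫ k = s.fA ≫ R := by
      calc s.fA ≫ γb ≫ E₁ ≫ k = (m' ≫ a) ≫ γb ≫ E₁ ≫ k := by rw [hm1]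
        _ = m' ≫ a ≫ γb ≫ E₁ ≫ k := by simp
        _ = m' ≫ γ ≫ J₁ ≫ k := by rw [e1]
        _ = (m' ≫ γ) ≫ J₁ ≫ k := by simp
        _ = (m' ≫ δ) ≫ J₁ ≫ k := by rw [hγδ]
        _ = m' ≫ δ ≫ J₁ ≫ k := by simp
        _ = m' ≫ b ≫ R := by rw [e3]
        _ = (m' ≫ b) ≫ R := by simp
        _ = s.fA ≫ R := by rw [hm2]
    have e6 : s.fA ≫ δb ≫ E₁ ≫ k = s.fA ≫ R := e4.symm.trans e5
    obtain ⟨w₁, hw₁⟩ := s.star (γb ≫ E₁ ≫ k) R e5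
    obtain ⟨w₂, hw₂⟩ := s.star (δb ≫ E₁ ≫ k) R e6
    have hw12 : w₁ ≫ γb = w₂ ≫ δb := by
      apply cancel (E₁ ≫ k)
      have : w₁ ≫ γb ≫ E₁ ≫ k = w₂ ≫ δb ≫ E₁ ≫ k := by rw [← hw₁, ← hw₂]
      simpa using this
    obtain ⟨v, hv1, hv2⟩ := pair w₁ w₂ hw12
    refine ⟨v, cancel (J₁ ≫ k) _ _ ?_⟩
    calc (yb ≫ δ) ≫ J₁ ≫ k = yb ≫ δ ≫ J₁ ≫ k := by simp
      _ = yb ≫ b ≫ R := by rw [e3]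
      _ = (yb ≫ b) ≫ R := by simp
      _ = s.uY ≫ R := by rw [hy2]
      _ = w₁ ≫ γb ≫ E₁ ≫ k := hw₁
      _ = (v ≫ a) ≫ γb ≫ E₁ ≫ k := by rw [hv1]
      _ = v ≫ a ≫ γb ≫ E₁ ≫ k := by simp
      _ = v ≫ γ ≫ J₁ ≫ k := by rw [e1]
      _ = (v ≫ γ) ≫ J₁ ≫ k := by simp
  · intro hb
    haveI := hb
    have hθ : (inv b ≫ a) ≫ γb = δb := by
      rw [Category.assoc, hab, ← Category.assoc, IsIso.inv_hom_id, Category.id_comp]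
    haveI := hendo (inv b ≫ a)
    exact hviol (asIso (inv b ≫ a)) (by simpa using hθ)

end Stmt9Aux

/-- under (C1), (C2), (C3), if for every object `A` and subgroup
`G ⊆ Aut A` the presheaf `X ↦ Hom_C(A, X)∕G` is a sheaf for the atomic topology on
`Cᵒᵖ`, then every morphism of `C` is definable by self-intersections. -/
theorem stmt9 {C : Type u} [SmallCategory C] (J : GrothendieckTopology Cᵒᵖ)
    (hJ : IsAtomicTopology J)
    (h1 : CondC1 J) (h2 : CondC2 J) (h3 : CondC3 C)
    (hsheaf : ∀ (A : C) (G : Subgroup (Aut A)), Presheaf.IsSheaf J (homQuotPre A G)) :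
    ∀ {A B : C} (f : A ⟶ B), DefinableBySelfIntersections f := by
  intro A B f Y u hu
  have ore' : ∀ {W V Z : C} (s : W ⟶ V) (t : W ⟶ Z),
      ∃ (T : C) (p : V ⟶ T) (r : Z ⟶ T), s ≫ p = t ≫ r := fun s t => Stmt9Aux.ore J hJ s t
  have cancel : ∀ {P W V : C} (s : W ⟶ V) (x y : P ⟶ W), x ≫ s = y ≫ s → x = y :=
    fun s x y h => Stmt9Aux.cancelRight J hJ hsheaf s x y h
  have hendo : ∀ {X : C} (e : X ⟶ X), IsIso e := fun e => Stmt9Aux.endo_iso h3 e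
  by_cases hterm : ∃ s : Stmt9Aux.St A B Y f u, Stmt9Aux.IsTerm s
  · obtain ⟨s, hs⟩ := hterm
    obtain ⟨p, hp⟩ := Stmt9Aux.diamond J hJ hsheaf (⊤ : Subgroup (Aut s.V)) s.fA (𝟙 s.V)
      (fun γ δ h => by
        obtain ⟨σ, hσ⟩ := hs γ δ h
        exact ⟨σ, trivial, by simpa using hσ⟩)
    refine ⟨s.uY ≫ p, ?_⟩
    calc (s.uY ≫ p) ≫ f = (s.uY ≫ p) ≫ s.fA ≫ s.toB := by rw [s.hf]
      _ = s.uY ≫ (p ≫ s.fA) ≫ s.toB := by simp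
      _ = s.uY ≫ s.toB := by rw [hp]; simp
      _ = u := s.hu
  · push_neg at hterm
    have hne : ∀ s : Stmt9Aux.St A B Y f u,
        Nonempty ((s' : Stmt9Aux.St A B Y f u) ×' (e : s'.V ⟶ s.V) ×' ¬ IsIso e) := by
      intro s
      obtain ⟨s', e, he⟩ := Stmt9Aux.step h2.1 ore' cancel hendo s (hterm s)
      exact ⟨⟨s', e, he⟩⟩
    let next := fun s => Classical.choice (hne s)
    let s₀ : Stmt9Aux.St A B Y f u :=
      ⟨B, f, u, 𝟙 B, Category.comp_id f, Category.comp_id u, fun γ δ h => hu γ δ h⟩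
    let seq : ℕ → Stmt9Aux.St A B Y f u := fun n => Nat.rec s₀ (fun _ s => (next s).1) n
    obtain ⟨n, hn⟩ := Stmt9Aux.chain_iso h3 (fun n => (seq n).V) (fun n => (next (seq n)).2.1)
    exact absurd hn (next (seq n)).2.2
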